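/- arXiv:2512.03311 — 2 statements merged into one kernel-verified Lean document; each statement's English description precedes it below -/
import Mathlib

section
/- Let d ≥ 1 agents each independently generate an infinite sequence of i.i.d. Bernoulli(p) bits (0 < p < 1), and let each agent's value be the number of steps until its first 0 outcome (i.e., a geometric random variable counting leading 1s plus the final flip). Let y_d be the probability that agent 1's value is strictly larger than the values of all other d−1 agents. Then y_d ≥ (2p)/((1+p)·d). -/
open Finset

lemma aux_pow_ineq (a b : ℝ) (hb : 0 ≤ b) (hab : b ≤ a) (n : ℕ) :
    2 * (a ^ n - b ^ n) ≤ (a - b) * n * (a ^ (n - 1) + b ^ (n - 1)) := by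
  rcases Nat.eq_zero_or_pos n with h0 | hn
  · simp [h0]
  have hgeom : (∑ i ∈ range n, a ^ i * b ^ (n - 1 - i)) * (a - b) = a ^ n - b ^ n :=
    geom_sum₂_mul a b n
  have hsum : 2 * (∑ i ∈ range n, a ^ i * b ^ (n - 1 - i))
      ≤ n * (a ^ (n - 1) + b ^ (n - 1)) := by
    have hrefl : (∑ i ∈ range n, a ^ i * b ^ (n - 1 - i))
        = ∑ i ∈ range n, a ^ (n - 1 - i) * b ^ i := by
      rw [← Finset.sum_range_reflect]
      apply Finset.sum_congr rfl
      intro i hi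
      simp only [mem_range] at hi
      congr 2 <;> omega
    have h2 : 2 * (∑ i ∈ range n, a ^ i * b ^ (n - 1 - i))
        = ∑ i ∈ range n, (a ^ i * b ^ (n - 1 - i) + a ^ (n - 1 - i) * b ^ i) := by
      rw [Finset.sum_add_distrib, ← hrefl]; ring
    rw [h2]
    calc ∑ i ∈ range n, (a ^ i * b ^ (n - 1 - i) + a ^ (n - 1 - i) * b ^ i)
        ≤ ∑ _i ∈ range n, (a ^ (n - 1) + b ^ (n - 1)) := by
          apply Finset.sum_le_sum
          intro i hi
          simp only [mem_range] at hi
          have h1 : 0 ≤ (a ^ i - b ^ i) * (a ^ (n - 1 - i) - b ^ (n - 1 - i)) :=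
            mul_nonneg (sub_nonneg.2 (pow_le_pow_left₀ hb hab i))
              (sub_nonneg.2 (pow_le_pow_left₀ hb hab _))
          have h2 : a ^ i * a ^ (n - 1 - i) = a ^ (n - 1) := by
            rw [← pow_add]; congr 1; omega
          have h3 : b ^ i * b ^ (n - 1 - i) = b ^ (n - 1) := by
            rw [← pow_add]; congr 1; omega
          nlinarith
      _ = n * (a ^ (n - 1) + b ^ (n - 1)) := by
          rw [Finset.sum_const, card_range, nsmul_eq_mul]
  have hab' : 0 ≤ a - b := sub_nonneg.2 hab
  calc 2 * (a ^ n - b ^ n)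
      = (a - b) * (2 * ∑ i ∈ range n, a ^ i * b ^ (n - 1 - i)) := by rw [← hgeom]; ring
    _ ≤ (a - b) * (↑n * (a ^ (n - 1) + b ^ (n - 1))) :=
        mul_le_mul_of_nonneg_left hsum hab'
    _ = (a - b) * n * (a ^ (n - 1) + b ^ (n - 1)) := by ring

/-- `d` agents each independently flip a coin that is `1` with probability `p` until the
first `0`; agent values are i.i.d. with `P(ℓ = k+1) = p^k (1-p)`.  The probability that
agent 1's value strictly exceeds all `d-1` other values is
`y_d = ∑_k p^k (1-p) (1 - p^k)^(d-1)`, since `P(ℓ ≤ k) = 1 - p^k`.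
Then `y_d ≥ 2p / ((1+p) d)`. -/
theorem stmt_0 (p : ℝ) (hp0 : 0 < p) (hp1 : p < 1) (d : ℕ) (hd : 1 ≤ d) :
    2 * p / ((1 + p) * d) ≤ ∑' k : ℕ, p ^ k * (1 - p) * (1 - p ^ k) ^ (d - 1) := by
  have hp0' : (0:ℝ) ≤ p := hp0.le
  have hp1' : p ≤ 1 := hp1.le
  have hpk : ∀ k : ℕ, 0 ≤ p ^ k := fun k => pow_nonneg hp0' k
  have hpk1 : ∀ k : ℕ, p ^ k ≤ 1 := fun k => pow_le_one₀ hp0' hp1'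
  have h1p : (0:ℝ) < 1 + p := by linarith
  -- base quantities
  set u : ℕ → ℝ := fun k => p ^ k * (1 - p) * (1 - p ^ k) ^ (d - 1) with hu_def
  have hu_nonneg : ∀ k, 0 ≤ u k := fun k =>
    mul_nonneg (mul_nonneg (hpk k) (by linarith)) (pow_nonneg (by linarith [hpk1 k]) _)
  have hu_le : ∀ k, u k ≤ p ^ k := by
    intro k
    have h1 : (1 - p ^ k) ^ (d - 1) ≤ 1 :=
      pow_le_one₀ (by linarith [hpk1 k]) (by linarith [hpk k])
    calc u k ≤ p ^ k * (1 - p) * 1 := by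
          apply mul_le_mul_of_nonneg_left h1 (mul_nonneg (hpk k) (by linarith))
      _ ≤ p ^ k * 1 * 1 := by
          apply mul_le_mul_of_nonneg_right _ zero_le_one
          apply mul_le_mul_of_nonneg_left (by linarith) (hpk k)
      _ = p ^ k := by ring
  have hgeo : Summable (fun k : ℕ => p ^ k) := summable_geometric_of_lt_one hp0' hp1
  have hT : Summable u := Summable.of_nonneg_of_le hu_nonneg hu_le hgeo
  rcases eq_or_lt_of_le hd with hd1 | hd2
  · -- d = 1
    have hd1' : d = 1 := hd1.symm
    subst hd1'
    have huu : u = fun k : ℕ => p ^ k * (1 - p) := by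
      funext k; simp [hu_def]
    rw [huu, tsum_mul_right, tsum_geometric_of_lt_one hp0' hp1]
    have h1p' : (1:ℝ) - p ≠ 0 := by linarith
    rw [inv_mul_cancel₀ (by linarith : (1:ℝ) - p ≠ 0)]
    rw [div_le_one (by simpa using h1p)]
    simp only [Nat.cast_one, mul_one]
    linarith
  · -- d ≥ 2
    have hd2' : 2 ≤ d := hd2
    have hdm : 1 ≤ d - 1 := by omega
    have hdpos : (0:ℝ) < d := by positivity
    set v : ℕ → ℝ := fun k => p ^ k * (1 - p) * (1 - p ^ (k + 1)) ^ (d - 1) with hv_def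
    have hv_nonneg : ∀ k, 0 ≤ v k := fun k =>
      mul_nonneg (mul_nonneg (hpk k) (by linarith)) (pow_nonneg (by linarith [hpk1 (k+1)]) _)
    have hv_le : ∀ k, v k ≤ p ^ k := by
      intro k
      have h1 : (1 - p ^ (k + 1)) ^ (d - 1) ≤ 1 :=
        pow_le_one₀ (by linarith [hpk1 (k+1)]) (by linarith [hpk (k+1)])
      calc v k ≤ p ^ k * (1 - p) * 1 := by
            apply mul_le_mul_of_nonneg_left h1 (mul_nonneg (hpk k) (by linarith))
        _ ≤ p ^ k * 1 * 1 := by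
            apply mul_le_mul_of_nonneg_right _ zero_le_one
            apply mul_le_mul_of_nonneg_left (by linarith) (hpk k)
        _ = p ^ k := by ring
    have hS : Summable v := Summable.of_nonneg_of_le hv_nonneg hv_le hgeo
    -- shift identity : ∑ u = p * ∑ v
    have hshift : ∑' k, u k = p * ∑' k, v k := by
      rw [Summable.tsum_eq_zero_add hT]
      have hu0 : u 0 = 0 := by
        simp only [hu_def, pow_zero, sub_self]
        rw [zero_pow (by omega : d - 1 ≠ 0)]
        ring
      have huk : ∀ k : ℕ, u (k + 1) = p * v k := by
        intro k
        simp only [hu_def, hv_def]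
        ring
      rw [hu0, zero_add]
      calc ∑' k, u (k + 1) = ∑' k, p * v k := by exact tsum_congr huk
        _ = p * ∑' k, v k := tsum_mul_left
    -- telescoping sum equals 1
    set f : ℕ → ℝ := fun k => (1 - p ^ (k + 1)) ^ d - (1 - p ^ k) ^ d with hf_def
    have hkey : ∀ k, 2 * f k ≤ (d : ℝ) * (v k + u k) := by
      intro k
      have hab : (1 : ℝ) - p ^ k ≤ 1 - p ^ (k + 1) := by
        have : p ^ (k + 1) ≤ p ^ k := by
          calc p ^ (k + 1) = p ^ k * p := by ring
            _ ≤ p ^ k * 1 := mul_le_mul_of_nonneg_left hp1' (hpk k)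
            _ = p ^ k := mul_one _
        linarith
      have hb : (0:ℝ) ≤ 1 - p ^ k := by linarith [hpk1 k]
      have := aux_pow_ineq (1 - p ^ (k + 1)) (1 - p ^ k) hb hab d
      have hdiff : (1 - p ^ (k + 1)) - (1 - p ^ k) = p ^ k * (1 - p) := by ring
      calc 2 * f k ≤ ((1 - p ^ (k + 1)) - (1 - p ^ k)) * d *
            ((1 - p ^ (k + 1)) ^ (d - 1) + (1 - p ^ k) ^ (d - 1)) := this
        _ = (d : ℝ) * (v k + u k) := by rw [hdiff]; simp only [hu_def, hv_def]; ring
    have hf_nonneg : ∀ k, 0 ≤ f k := by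
      intro k
      have hab : (1 : ℝ) - p ^ k ≤ 1 - p ^ (k + 1) := by
        have : p ^ (k + 1) ≤ p ^ k := by
          calc p ^ (k + 1) = p ^ k * p := by ring
            _ ≤ p ^ k * 1 := mul_le_mul_of_nonneg_left hp1' (hpk k)
            _ = p ^ k := mul_one _
        linarith
      have hb : (0:ℝ) ≤ 1 - p ^ k := by linarith [hpk1 k]
      simp only [hf_def]
      have := pow_le_pow_left₀ hb hab d
      linarith
    have hg : Summable (fun k => (d : ℝ) / 2 * (v k + u k)) := ((hS.add hT).mul_left _)
    have hf_le : ∀ k, f k ≤ (d : ℝ) / 2 * (v k + u k) := by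
      intro k
      have h := hkey k
      clear_value u v f
      linarith
    have hf_sum : Summable f := Summable.of_nonneg_of_le hf_nonneg hf_le hg
    have hf_tsum : ∑' k, f k = 1 := by
      have htel : ∀ N : ℕ, ∑ k ∈ range N, f k = (1 - p ^ N) ^ d := by
        intro N
        have := Finset.sum_range_sub (fun k : ℕ => (1 - p ^ k) ^ d) N
        simp only [hf_def]
        rw [this]
        have : ((1:ℝ) - p ^ 0) ^ d = 0 := by
          simp [zero_pow (by omega : d ≠ 0)]
        rw [this, sub_zero]
      have h1 : Filter.Tendsto (fun N => ∑ k ∈ range N, f k) Filter.atTop (nhds 1) := by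
        simp only [htel]
        have hpt : Filter.Tendsto (fun N : ℕ => p ^ N) Filter.atTop (nhds 0) :=
          tendsto_pow_atTop_nhds_zero_of_lt_one hp0' hp1
        have : Filter.Tendsto (fun N : ℕ => (1 - p ^ N) ^ d) Filter.atTop
            (nhds ((1 - 0) ^ d)) := (Filter.Tendsto.const_sub 1 hpt).pow d
        simpa using this
      exact tendsto_nhds_unique hf_sum.hasSum.tendsto_sum_nat h1
    -- combine
    have hcomp : (1:ℝ) ≤ ∑' k, (d : ℝ) / 2 * (v k + u k) := by
      rw [← hf_tsum]
      exact Summable.tsum_le_tsum hf_le hf_sum hg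
    have hsplit : ∑' k, (d : ℝ) / 2 * (v k + u k)
        = (d : ℝ) / 2 * (∑' k, v k + ∑' k, u k) := by
      rw [tsum_mul_left, Summable.tsum_add hS hT]
    rw [hsplit] at hcomp
    set T := ∑' k, u k with hT_def
    set S := ∑' k, v k with hS_def
    -- T = p * S, so S = T / p
    have hTS : T = p * S := hshift
    rw [div_le_iff₀ (by positivity : (0:ℝ) < (1 + p) * d)]
    -- from 1 ≤ d/2 * (S + T) and T = p S : 2 ≤ d (S + T) = d (T/p + T)
    -- 2p ≤ d (T + pT) = T (1+p) d
    nlinarith [hcomp, hTS, hdpos, hp0]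
end

section
/- For p = 1/2, the probability that the first of d agents (each generating i.i.d. geometric values as the number of fair coin flips up to and including the first 0) has a value strictly larger than all other d−1 agents is at least 2/(3d). -/
open Finset

noncomputable def Sgeo (n : ℕ) : ℝ := ∑' k : ℕ, ((1:ℝ)/2)^(k+1) * (1 - (1/2:ℝ)^k)^n

lemma q_nonneg (k : ℕ) : (0:ℝ) ≤ 1 - (1/2:ℝ)^k := by
  have : (1/2:ℝ)^k ≤ 1 := pow_le_one₀ (by norm_num) (by norm_num)
  linarith

lemma summable_g (n : ℕ) :
    Summable (fun k : ℕ => ((1:ℝ)/2)^(k+1) * (1 - (1/2:ℝ)^k)^n) := by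
  have hs : Summable (fun k : ℕ => ((1:ℝ)/2) * (1/2:ℝ)^k) :=
    (summable_geometric_of_lt_one (by norm_num) (by norm_num)).mul_left _
  refine Summable.of_nonneg_of_le (fun k => mul_nonneg (by positivity) (pow_nonneg (q_nonneg k) n)) (fun k => ?_) hs
  have h1 : (1 - (1/2:ℝ)^k)^n ≤ 1 :=
    pow_le_one₀ (q_nonneg k) (sub_le_self 1 (by positivity))
  calc ((1:ℝ)/2)^(k+1) * (1 - (1/2:ℝ)^k)^n ≤ ((1:ℝ)/2)^(k+1) * 1 := by
        apply mul_le_mul_of_nonneg_left h1 (by positivity)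
    _ = (1/2:ℝ) * (1/2:ℝ)^k := by ring

lemma Sgeo_zero : Sgeo 0 = 1 := by
  unfold Sgeo
  simp only [pow_zero, mul_one]
  have := tsum_geometric_of_lt_one (r := (1/2:ℝ)) (by norm_num) (by norm_num)
  calc ∑' k : ℕ, ((1:ℝ)/2)^(k+1) = ∑' k : ℕ, (1/2:ℝ) * (1/2:ℝ)^k := by
        congr 1; funext k; ring
    _ = (1/2:ℝ) * ∑' k : ℕ, (1/2:ℝ)^k := by rw [tsum_mul_left]
    _ = 1 := by rw [this]; norm_num

lemma Sgeo_rec (n : ℕ) (hn : 1 ≤ n) :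
    Sgeo n = ∑ j ∈ range (n+1), ((1:ℝ)/2)^(n+1) * (n.choose j) * Sgeo j := by
  have hterm : ∀ k : ℕ, ((1:ℝ)/2)^(k+1+1) * (1 - (1/2:ℝ)^(k+1))^n
      = ∑ j ∈ range (n+1), ((1:ℝ)/2)^(n+1) * (n.choose j) *
        (((1:ℝ)/2)^(k+1) * (1 - (1/2:ℝ)^k)^j) := by
    intro k
    have hq : (1 - (1/2:ℝ)^(k+1)) = (1/2) * ((1 - (1/2:ℝ)^k) + 1) := by ring
    rw [hq, mul_pow, add_pow, Finset.mul_sum, Finset.mul_sum]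
    refine Finset.sum_congr rfl fun j hj => ?_
    rw [one_pow]
    ring
  have hz : ((1:ℝ)/2)^(0+1) * (1 - (1/2:ℝ)^0)^n = 0 := by
    simp [zero_pow (by omega : n ≠ 0)]
  calc Sgeo n = ((1:ℝ)/2)^(0+1) * (1 - (1/2:ℝ)^0)^n
      + ∑' k : ℕ, ((1:ℝ)/2)^(k+1+1) * (1 - (1/2:ℝ)^(k+1))^n :=
        Summable.tsum_eq_zero_add (summable_g n)
    _ = ∑' k : ℕ, ∑ j ∈ range (n+1), ((1:ℝ)/2)^(n+1) * (n.choose j) *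
          (((1:ℝ)/2)^(k+1) * (1 - (1/2:ℝ)^k)^j) := by
        rw [hz, zero_add]; exact tsum_congr hterm
    _ = ∑ j ∈ range (n+1), ∑' k : ℕ, ((1:ℝ)/2)^(n+1) * (n.choose j) *
          (((1:ℝ)/2)^(k+1) * (1 - (1/2:ℝ)^k)^j) :=
        Summable.tsum_finsetSum (fun j _ => (summable_g j).mul_left _)
    _ = ∑ j ∈ range (n+1), ((1:ℝ)/2)^(n+1) * (n.choose j) * Sgeo j := by
        refine Finset.sum_congr rfl fun j hj => ?_
        rw [tsum_mul_left]; rfl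

lemma sum_choose_succ (n : ℕ) :
    ∑ j ∈ range (n+1), (n+1).choose (j+1) = 2^(n+1) - 1 := by
  have h := Nat.sum_range_choose (n+1)
  rw [Finset.sum_range_succ'] at h
  simp only [Nat.choose_zero_right] at h
  omega

lemma choose_div_sum (n : ℕ) :
    ∑ j ∈ range (n+1), (n.choose j : ℝ) / (j+1) = ((2:ℝ)^(n+1) - 1) / (n+1) := by
  have key : ∀ j ∈ range (n+1),
      (n.choose j : ℝ) / (j+1) = ((n+1).choose (j+1) : ℝ) / (n+1) := by
    intro j hj
    have h : (n+1) * n.choose j = (n+1).choose (j+1) * (j+1) := by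
      have := Nat.add_one_mul_choose_eq n j
      simpa [Nat.succ_eq_add_one] using this
    have h' : ((n:ℝ)+1) * (n.choose j : ℝ) = ((n+1).choose (j+1) : ℝ) * ((j:ℝ)+1) := by
      exact_mod_cast h
    rw [div_eq_div_iff (by positivity) (by positivity)]
    linarith [h']
  rw [Finset.sum_congr rfl key, ← Finset.sum_div]
  congr 1
  have h1 : 1 ≤ 2^(n+1) := Nat.one_le_two_pow
  have h2 : (∑ j ∈ range (n+1), ((n+1).choose (j+1) : ℝ))
      = (((2^(n+1) - 1 : ℕ)) : ℝ) := by
    rw [← Nat.cast_sum, sum_choose_succ n]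
  rw [h2, Nat.cast_sub h1]
  push_cast
  ring

lemma Sgeo_nonneg (n : ℕ) : 0 ≤ Sgeo n :=
  tsum_nonneg fun k => mul_nonneg (by positivity) (pow_nonneg (q_nonneg k) n)

lemma Sgeo_ge (n : ℕ) : 2 / (3 * ((n:ℝ)+1)) ≤ Sgeo n := by
  induction n using Nat.strong_induction_on with
  | _ n ih =>
    match n, ih with
    | 0, _ => rw [Sgeo_zero]; norm_num
    | (m+1), ih =>
      set N : ℕ := m + 1 with hNdef
      set x : ℝ := (2:ℝ)^(N+1) with hxdef
      set t : ℝ := (N:ℝ) + 1 with htdef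
      have ht2 : (2:ℝ) ≤ t := by
        rw [htdef, hNdef]; push_cast; linarith [Nat.cast_nonneg (α := ℝ) m]
      have hx4 : (4:ℝ) ≤ x := by
        rw [hxdef]
        calc (4:ℝ) = 2^2 := by norm_num
          _ ≤ 2^(N+1) := pow_le_pow_right₀ (by norm_num) (by omega)
      have hxpos : (0:ℝ) < x := by linarith
      have hc : ((1:ℝ)/2)^(N+1) = 1/x := by
        rw [hxdef, div_pow, one_pow]
      -- the recursion, with the top term peeled off
      have hrec := Sgeo_rec N (by omega)
      rw [Finset.sum_range_succ, Nat.choose_self, Nat.cast_one, mul_one] at hrec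
      rw [hc] at hrec
      set B : ℝ := ∑ j ∈ range N, ((N.choose j : ℝ) * Sgeo j) with hBdef
      have hsum_eq : ∑ j ∈ range N, (1/x) * ((N.choose j : ℝ)) * Sgeo j = (1/x) * B := by
        rw [hBdef, Finset.mul_sum]
        exact Finset.sum_congr rfl fun j _ => by ring
      have heq : Sgeo N * x = B + Sgeo N := by
        rw [hsum_eq] at hrec
        field_simp at hrec
        linarith
      -- the partial binomial harmonic sum
      have hSig : ∑ j ∈ range N, (N.choose j : ℝ) / (j+1) = (x - 2) / t := by
        have h := choose_div_sum N
        rw [Finset.sum_range_succ, Nat.choose_self, Nat.cast_one] at h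
        have hNN : ((N:ℝ)+1) = t := rfl
        have : ∑ j ∈ range N, (N.choose j : ℝ) / (j+1) = (x - 1)/t - 1/t := by
          rw [← hxdef] at h; linarith [h]
        rw [this, div_sub_div_same]
        ring_nf
      -- lower bound on B using the induction hypothesis
      have hB : (2/3) * ((x-2)/t) + 1/3 ≤ B := by
        rw [← hSig, Finset.mul_sum, hBdef]
        rw [Finset.sum_range_succ' (fun j => (N.choose j : ℝ) * Sgeo j) m,
            Finset.sum_range_succ' (fun j => (2/3) * ((N.choose j : ℝ) / ((j:ℝ)+1))) m]
        have hA : ∑ i ∈ range m, (2/3) * ((N.choose (i+1) : ℝ) / (((i+1:ℕ):ℝ)+1))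
            ≤ ∑ i ∈ range m, (N.choose (i+1) : ℝ) * Sgeo (i+1) := by
          refine Finset.sum_le_sum fun i hi => ?_
          have hIH := ih (i+1) (by have := Finset.mem_range.mp hi; omega)
          calc (2/3) * ((N.choose (i+1) : ℝ) / (((i+1:ℕ):ℝ)+1))
              = (N.choose (i+1) : ℝ) * (2 / (3 * (((i+1:ℕ):ℝ)+1))) := by
                have : (0:ℝ) < ((i+1:ℕ):ℝ)+1 := by positivity
                field_simp
            _ ≤ (N.choose (i+1) : ℝ) * Sgeo (i+1) :=
                mul_le_mul_of_nonneg_left hIH (Nat.cast_nonneg _)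
        have hz : (N.choose 0 : ℝ) * Sgeo 0 = 1 := by
          rw [Sgeo_zero, Nat.choose_zero_right, Nat.cast_one, mul_one]
        have hz2 : (2/3) * ((N.choose 0 : ℝ) / (((0:ℕ):ℝ)+1)) = 2/3 := by
          rw [Nat.choose_zero_right, Nat.cast_one]; norm_num
        push_cast at hA hz hz2 ⊢
        linarith [hA]
      -- final arithmetic
      have htpos : (0:ℝ) < t := by linarith
      have hB' : 2*(x-2) + t ≤ B * (3*t) := by
        have e1 : (2/3)*((x-2)/t)+1/3 = (2*(x-2)+t)/(3*t) := by
          field_simp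
        rw [e1, div_le_iff₀ (by positivity)] at hB
        exact hB
      rw [div_le_iff₀ (by positivity : (0:ℝ) < 3 * ((↑(m+1):ℝ)+1))]
      have htt : ((↑(m+1):ℝ)+1) = t := by rw [htdef, hNdef]
      rw [htt]
      by_contra hcon
      push_neg at hcon
      have h1 : B*(3*t) = Sgeo N*(3*t)*x - Sgeo N*(3*t) := by linear_combination (-(3*t))*heq
      have h3 : Sgeo N*(3*t)*(x-1) < 2*(x-1) :=
        mul_lt_mul_of_pos_right hcon (by linarith)
      nlinarith [h1, h3, hB', ht2, hx4]

/-- For `p = 1/2`: each of `d` agents records an i.i.d. geometric value with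
`P(ℓ = k+1) = (1/2)^(k+1)` and `P(ℓ ≤ k) = 1 - (1/2)^k`.  The probability that the first
agent's value strictly exceeds all the other `d-1` values is at least `2/(3d)`. -/
theorem stmt_1 (d : ℕ) (hd : 1 ≤ d) :
    2 / (3 * d) ≤ ∑' k : ℕ, ((1 : ℝ) / 2) ^ (k + 1) * (1 - (1 / 2 : ℝ) ^ k) ^ (d - 1) := by
  have h := Sgeo_ge (d - 1)
  have hcast : ((d - 1 : ℕ) : ℝ) + 1 = (d : ℝ) := by
    rw [Nat.cast_sub hd]
    push_cast
    ring
  rw [hcast] at h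
  exact h
end
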